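/- arXiv:1208.2429 — 3 statements merged into one kernel-verified Lean document; each statement's English description precedes it below -/
import Mathlib

section
/- Let A ∈ ℝ^{n×n}, B ∈ ℝ^{n×m}, U ⊆ ℝᵐ, X∞ ⊆ ℝⁿ, V_p : ℝⁿ → ℝ, and let Q ∈ ℝ^{n×n}, R ∈ ℝ^{m×m} and constants q, ρ ≥ 0 satisfy xᵀQx ≤ q‖x‖² for all x and uᵀRu ≤ ρ‖u‖² for all u (e.g., q and ρ the largest eigenvalues of symmetric Q ⪰ 0 and R ≻ 0). Assume there exist constants α₃ > 0 and c > 0 such that for every x ∈ X∞ there exists u ∈ U with ‖u‖ ≤ c‖x‖, A x + B u ∈ X∞, and V_p(A x + B u) − V_p(x) ≤ −α₃‖x‖². Then for every β ≥ β* := (q + c²ρ)/α₃ and every x ∈ X∞, there exists u ∈ U satisfying A x + B u ∈ X∞ and β V_p(A x + B u) − β V_p(x) ≤ −ℓ(x,u), where ℓ(x,u) := xᵀQx + uᵀRu. -/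
open scoped Matrix

/-! The decrease `α₃‖x‖²` of `V_p` along the admissible input dominates the stage cost up to the
factor `β*`: with `‖u‖ ≤ c‖x‖` one has `ℓ(x,u) ≤ q‖x‖² + ρc²‖x‖² = β* α₃ ‖x‖²`. -/

theorem add_le_mul_sq_of_le_mul {a b q ρ c s t : ℝ} (hρ : 0 ≤ ρ) (ha : a ≤ q * s ^ 2)
    (hb : b ≤ ρ * t ^ 2) (ht₀ : 0 ≤ t) (ht : t ≤ c * s) : a + b ≤ (q + c ^ 2 * ρ) * s ^ 2 := by
  have hsq : t ^ 2 ≤ (c * s) ^ 2 := pow_le_pow_left₀ ht₀ ht 2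
  calc a + b ≤ q * s ^ 2 + ρ * (c * s) ^ 2 := by gcongr; exact hb.trans (by gcongr)
    _ = (q + c ^ 2 * ρ) * s ^ 2 := by ring

theorem mul_le_neg_of_le_neg_mul_sq {α β L Δ ℓ s : ℝ} (hα : 0 < α) (hL : 0 ≤ L)
    (hβ : L / α ≤ β) (hΔ : Δ ≤ -α * s ^ 2) (hℓ : ℓ ≤ L * s ^ 2) : β * Δ ≤ -ℓ := by
  have hβ₀ : 0 ≤ β := (div_nonneg hL hα.le).trans hβ
  have hLβ : L ≤ β * α := (div_le_iff₀ hα).mp hβ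
  calc β * Δ ≤ β * (-α * s ^ 2) := mul_le_mul_of_nonneg_left hΔ hβ₀
    _ = -((β * α) * s ^ 2) := by ring
    _ ≤ -(L * s ^ 2) := by gcongr
    _ ≤ -ℓ := neg_le_neg hℓ

theorem stmt_4_general {n m : ℕ} (A : Matrix (Fin n) (Fin n) ℝ) (B : Matrix (Fin n) (Fin m) ℝ)
    (U : Set (EuclideanSpace ℝ (Fin m))) (Xinf : Set (EuclideanSpace ℝ (Fin n)))
    (Vp : EuclideanSpace ℝ (Fin n) → ℝ)
    (Q : Matrix (Fin n) (Fin n) ℝ) (R : Matrix (Fin m) (Fin m) ℝ)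
    (q ρ : ℝ) (hq : 0 ≤ q) (hρ : 0 ≤ ρ)
    (hQ : ∀ x : EuclideanSpace ℝ (Fin n), (x : Fin n → ℝ) ⬝ᵥ Q.mulVec x ≤ q * ‖x‖ ^ 2)
    (hR : ∀ u : EuclideanSpace ℝ (Fin m), (u : Fin m → ℝ) ⬝ᵥ R.mulVec u ≤ ρ * ‖u‖ ^ 2)
    (α₃ c : ℝ) (hα₃ : 0 < α₃)
    (hdec : ∀ x ∈ Xinf, ∃ u ∈ U, ‖u‖ ≤ c * ‖x‖ ∧
      (WithLp.toLp 2 (A.mulVec x + B.mulVec u) : EuclideanSpace ℝ (Fin n)) ∈ Xinf ∧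
      Vp (WithLp.toLp 2 (A.mulVec x + B.mulVec u) : EuclideanSpace ℝ (Fin n)) - Vp x ≤ -α₃ * ‖x‖ ^ 2) :
    ∀ β ≥ (q + c ^ 2 * ρ) / α₃, ∀ x ∈ Xinf, ∃ u ∈ U,
      (WithLp.toLp 2 (A.mulVec x + B.mulVec u) : EuclideanSpace ℝ (Fin n)) ∈ Xinf ∧
      β * Vp (WithLp.toLp 2 (A.mulVec x + B.mulVec u) : EuclideanSpace ℝ (Fin n)) - β * Vp x ≤
        -((x : Fin n → ℝ) ⬝ᵥ Q.mulVec x + (u : Fin m → ℝ) ⬝ᵥ R.mulVec u) := by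
  intro β hβ x hx
  obtain ⟨u, hu, hnorm, hmem, hdecr⟩ := hdec x hx
  refine ⟨u, hu, hmem, ?_⟩
  rw [← mul_sub]
  exact mul_le_neg_of_le_neg_mul_sq hα₃ (by positivity) hβ hdecr
    (add_le_mul_sq_of_le_mul hρ (hQ x) (hR u) (norm_nonneg u) hnorm)

/-- Suppose `xᵀQx ≤ q‖x‖²`, `uᵀRu ≤ ρ‖u‖²` (with `Q ⪰ 0`, `R ≻ 0`
symmetric, `q, ρ ≥ 0`), and on the control-invariant set `X∞` there are `α₃ > 0`,
`c > 0` such that every `x ∈ X∞` admits `u ∈ U` with `‖u‖ ≤ c‖x‖`, `Ax + Bu ∈ X∞`,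
and `V_p(Ax+Bu) − V_p(x) ≤ −α₃‖x‖²`. Then for every `β ≥ β* = (q + c²ρ)/α₃` and
every `x ∈ X∞` there is `u ∈ U` with `Ax + Bu ∈ X∞` and
`β V_p(Ax+Bu) − β V_p(x) ≤ −ℓ(x,u)` where `ℓ(x,u) = xᵀQx + uᵀRu`. -/
theorem stmt_4 {n m : ℕ} (A : Matrix (Fin n) (Fin n) ℝ) (B : Matrix (Fin n) (Fin m) ℝ)
    (U : Set (EuclideanSpace ℝ (Fin m))) (Xinf : Set (EuclideanSpace ℝ (Fin n)))
    (Vp : EuclideanSpace ℝ (Fin n) → ℝ)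
    (Q : Matrix (Fin n) (Fin n) ℝ) (R : Matrix (Fin m) (Fin m) ℝ)
    (hQpsd : Q.PosSemidef) (hRpd : R.PosDef)
    (q ρ : ℝ) (hq : 0 ≤ q) (hρ : 0 ≤ ρ)
    (hQ : ∀ x : EuclideanSpace ℝ (Fin n), (x : Fin n → ℝ) ⬝ᵥ Q.mulVec x ≤ q * ‖x‖ ^ 2)
    (hR : ∀ u : EuclideanSpace ℝ (Fin m), (u : Fin m → ℝ) ⬝ᵥ R.mulVec u ≤ ρ * ‖u‖ ^ 2)
    (α₃ c : ℝ) (hα₃ : 0 < α₃) (hc : 0 < c)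
    (hdec : ∀ x ∈ Xinf, ∃ u ∈ U, ‖u‖ ≤ c * ‖x‖ ∧
      (WithLp.toLp 2 (A.mulVec x + B.mulVec u) : EuclideanSpace ℝ (Fin n)) ∈ Xinf ∧
      Vp (WithLp.toLp 2 (A.mulVec x + B.mulVec u) : EuclideanSpace ℝ (Fin n)) - Vp x ≤ -α₃ * ‖x‖ ^ 2) :
    ∀ β ≥ (q + c ^ 2 * ρ) / α₃, ∀ x ∈ Xinf, ∃ u ∈ U,
      (WithLp.toLp 2 (A.mulVec x + B.mulVec u) : EuclideanSpace ℝ (Fin n)) ∈ Xinf ∧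
      β * Vp (WithLp.toLp 2 (A.mulVec x + B.mulVec u) : EuclideanSpace ℝ (Fin n)) - β * Vp x ≤
        -((x : Fin n → ℝ) ⬝ᵥ Q.mulVec x + (u : Fin m → ℝ) ⬝ᵥ R.mulVec u) :=
  stmt_4_general A B U Xinf Vp Q R q ρ hq hρ hQ hR α₃ c hα₃ hdec
end

section
/- Let A ∈ ℝ^{n×n}, B ∈ ℝ^{n×m}, X ⊆ ℝⁿ, U ⊆ ℝᵐ, and let X∞ := {x : ∃ (u(k)) with u(k) ∈ U, φ(k;x,u) ∈ X for all k, and φ(k;x,u) → 0} be the maximal controllable set. Let V_p : ℝⁿ → ℝ, α₁ > 0, λ ∈ [0,1), c > 0, β > 0 be such that α₁‖y‖² ≤ V_p(y) for all y, and for every y ∈ X∞ there exists u ∈ U with ‖u‖ ≤ c‖y‖, A y + B u ∈ X∞, V_p(A y + B u) ≤ λ² V_p(y), and β V_p(A y + B u) + ℓ(y,u) ≤ β V_p(y), where ℓ(x,u) := xᵀQx + uᵀRu with Q ⪰ 0, R ⪰ 0 symmetric. Let V⁰_∞(x) := inf over all admissible infinite-horizon sequences u ∈ U_∞(x) of Σ_{k=0}^∞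 ℓ(φ(k;x,u),u(k)), and let V⁰_{N,β}(x) be the optimal value of the N-horizon problem with terminal cost β V_p and terminal constraint φ(N;x,u) ∈ X∞. Then V⁰_∞(x) ≤ V⁰_{N,β}(x) for every N ∈ ℕ and every x ∈ X∞. -/
open scoped Matrix

/-- The state `φ(k; x, u)` of the linear system `x⁺ = A x + B u` at time `k`,
starting from `x(0) = x` under the control sequence `u`. -/
noncomputable def traj {n m : ℕ} (A : Matrix (Fin n) (Fin n) ℝ) (B : Matrix (Fin n) (Fin m) ℝ)
    (x : EuclideanSpace ℝ (Fin n)) (u : ℕ → EuclideanSpace ℝ (Fin m)) :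
    ℕ → EuclideanSpace ℝ (Fin n)
  | 0 => x
  | k + 1 => (WithLp.toLp 2 (A.mulVec (traj A B x u k) + B.mulVec (u k)) : EuclideanSpace ℝ (Fin n))

/-- The stage cost `ℓ(x,u) = xᵀQx + uᵀRu`. -/
noncomputable def stageCost {n m : ℕ} (Q : Matrix (Fin n) (Fin n) ℝ)
    (R : Matrix (Fin m) (Fin m) ℝ) (x : EuclideanSpace ℝ (Fin n))
    (u : EuclideanSpace ℝ (Fin m)) : ℝ :=
  (x : Fin n → ℝ) ⬝ᵥ Q.mulVec x + (u : Fin m → ℝ) ⬝ᵥ R.mulVec u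

/-- The optimal value `V⁰_{N,β}(x)` of the `N`-horizon problem with terminal cost
`β V_p` and terminal constraint `φ(N; x, u) ∈ X∞`. -/
noncomputable def V0 {n m : ℕ} (A : Matrix (Fin n) (Fin n) ℝ) (B : Matrix (Fin n) (Fin m) ℝ)
    (X : Set (EuclideanSpace ℝ (Fin n))) (U : Set (EuclideanSpace ℝ (Fin m)))
    (Xinf : Set (EuclideanSpace ℝ (Fin n)))
    (Q : Matrix (Fin n) (Fin n) ℝ) (R : Matrix (Fin m) (Fin m) ℝ)
    (Vp : EuclideanSpace ℝ (Fin n) → ℝ) (β : ℝ) (N : ℕ) (x : EuclideanSpace ℝ (Fin n)) : ℝ :=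
  sInf {v : ℝ | ∃ u : ℕ → EuclideanSpace ℝ (Fin m),
    (∀ k < N, u k ∈ U) ∧ (∀ k < N, traj A B x u k ∈ X) ∧ traj A B x u N ∈ Xinf ∧
    v = β * Vp (traj A B x u N) +
      ∑ k ∈ Finset.range N, stageCost Q R (traj A B x u k) (u k)}

/-- The optimal value `V⁰_∞(x)` of the infinite-horizon problem over admissible
sequences `u ∈ U_∞(x)` (inputs in `U`, states in `X`, state converging to `0`). -/
noncomputable def Vinf0 {n m : ℕ} (A : Matrix (Fin n) (Fin n) ℝ) (B : Matrix (Fin n) (Fin m) ℝ)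
    (X : Set (EuclideanSpace ℝ (Fin n))) (U : Set (EuclideanSpace ℝ (Fin m)))
    (Q : Matrix (Fin n) (Fin n) ℝ) (R : Matrix (Fin m) (Fin m) ℝ)
    (x : EuclideanSpace ℝ (Fin n)) : ℝ :=
  sInf {v : ℝ | ∃ u : ℕ → EuclideanSpace ℝ (Fin m),
    (∀ k, u k ∈ U) ∧ (∀ k, traj A B x u k ∈ X) ∧
    Filter.Tendsto (fun k => traj A B x u k) Filter.atTop (nhds 0) ∧
    v = ∑' k : ℕ, stageCost Q R (traj A B x u k) (u k)}

/-! Extend a feasible finite-horizon control sequence, once its state has reached `X∞`, by a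
feedback `y ↦ κ y` chosen pointwise from the decrease hypothesis. The `β`-decrease condition
telescopes, so the tail of stage costs along the closed loop is at most `β V_p` of the terminal
state, while the `λ²`-contraction of `V_p` and its quadratic lower bound drive the closed-loop
state to `0`. The extended sequence is therefore admissible for the infinite-horizon problem,
with cost at most the finite-horizon cost. -/

open Filter Topology Finset

section Iterates

variable {α : Type*} {f : α → α} {S : Set α}

theorem apply_iterate_le_pow_mul_of_mapsTo {V : α → ℝ} {r : ℝ} (hf : Set.MapsTo f S S)
    (hr : 0 ≤ r) (hV : ∀ y ∈ S, V (f y) ≤ r * V y) {y : α} (hy : y ∈ S) (k : ℕ) :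
    V (f^[k] y) ≤ r ^ k * V y := by
  induction k with
  | zero => simp
  | succ k ih =>
    rw [Function.iterate_succ_apply', pow_succ', mul_assoc]
    exact (hV _ (hf.iterate k hy)).trans (mul_le_mul_of_nonneg_left ih hr)

theorem sum_range_iterate_add_le_of_mapsTo {V L : α → ℝ} (hf : Set.MapsTo f S S)
    (hV : ∀ y ∈ S, V (f y) + L y ≤ V y) {y : α} (hy : y ∈ S) (K : ℕ) :
    ∑ k ∈ range K, L (f^[k] y) + V (f^[K] y) ≤ V y := by
  induction K with
  | zero => simp
  | succ K ih =>
    rw [sum_range_succ, Function.iterate_succ_apply']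
    linarith [hV _ (hf.iterate K hy)]

theorem summable_iterate_and_tsum_le_of_mapsTo {V L : α → ℝ} (hf : Set.MapsTo f S S)
    (hV : ∀ y ∈ S, V (f y) + L y ≤ V y) (hV0 : ∀ y ∈ S, 0 ≤ V y) (hL0 : ∀ y ∈ S, 0 ≤ L y)
    {y : α} (hy : y ∈ S) :
    Summable (fun k => L (f^[k] y)) ∧ ∑' k, L (f^[k] y) ≤ V y := by
  have hpartial (K : ℕ) : ∑ k ∈ range K, L (f^[k] y) ≤ V y := by
    linarith [sum_range_iterate_add_le_of_mapsTo hf hV hy K, hV0 _ (hf.iterate K hy)]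
  have hnonneg (k : ℕ) : 0 ≤ L (f^[k] y) := hL0 _ (hf.iterate k hy)
  exact ⟨summable_of_sum_range_le hnonneg hpartial, Real.tsum_le_of_sum_range_le hnonneg hpartial⟩

theorem tendsto_iterate_zero_of_mapsTo {E : Type*} [NormedAddCommGroup E] {f : E → E}
    {S : Set E} {V : E → ℝ} {a r : ℝ} (hf : Set.MapsTo f S S) (ha : 0 < a) (hr0 : 0 ≤ r)
    (hr1 : r < 1) (hlow : ∀ y, a * ‖y‖ ^ 2 ≤ V y) (hV : ∀ y ∈ S, V (f y) ≤ r * V y)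
    {y : E} (hy : y ∈ S) :
    Tendsto (fun k => f^[k] y) atTop (𝓝 0) := by
  have hsq_le (k : ℕ) : ‖f^[k] y‖ ^ 2 ≤ r ^ k * (V y / a) := by
    rw [← mul_div_assoc, le_div_iff₀ ha, mul_comm]
    exact (hlow _).trans (apply_iterate_le_pow_mul_of_mapsTo hf hr0 hV hy k)
  have hsq : Tendsto (fun k => ‖f^[k] y‖ ^ 2) atTop (𝓝 0) := by
    refine squeeze_zero (fun k => by positivity) hsq_le ?_
    simpa using (tendsto_pow_atTop_nhds_zero_of_lt_one hr0 hr1).mul_const (V y / a)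
  rw [tendsto_zero_iff_norm_tendsto_zero]
  simpa [Real.sqrt_sq (norm_nonneg _)] using hsq.sqrt

end Iterates

section LinearSystem

variable {n m : ℕ} {A : Matrix (Fin n) (Fin n) ℝ} {B : Matrix (Fin n) (Fin m) ℝ}
  {X : Set (EuclideanSpace ℝ (Fin n))} {U : Set (EuclideanSpace ℝ (Fin m))}
  {Q : Matrix (Fin n) (Fin n) ℝ} {R : Matrix (Fin m) (Fin m) ℝ}

theorem stageCost_nonneg (hQ : Q.PosSemidef) (hR : R.PosSemidef)
    (x : EuclideanSpace ℝ (Fin n)) (u : EuclideanSpace ℝ (Fin m)) : 0 ≤ stageCost Q R x u := by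
  have hx := hQ.re_dotProduct_nonneg (x : Fin n → ℝ)
  have hu := hR.re_dotProduct_nonneg (u : Fin m → ℝ)
  simp only [star_trivial, RCLike.re_to_real] at hx hu
  exact add_nonneg hx hu

theorem traj_congr {x : EuclideanSpace ℝ (Fin n)} {u v : ℕ → EuclideanSpace ℝ (Fin m)} {k : ℕ}
    (h : ∀ j < k, u j = v j) : traj A B x u k = traj A B x v k := by
  induction k with
  | zero => rfl
  | succ k ih =>
    rw [traj, traj, ih fun j hj => h j (by omega), h k k.lt_succ_self]

theorem traj_add (x : EuclideanSpace ℝ (Fin n)) (u : ℕ → EuclideanSpace ℝ (Fin m)) (N j : ℕ) :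
    traj A B x u (N + j) = traj A B (traj A B x u N) (fun i => u (N + i)) j := by
  induction j with
  | zero => rfl
  | succ j ih => rw [← add_assoc, traj, ih, traj]

theorem traj_ite_of_le (x : EuclideanSpace ℝ (Fin n)) (u v : ℕ → EuclideanSpace ℝ (Fin m))
    {N k : ℕ} (hk : k ≤ N) :
    traj A B x (fun i => if i < N then u i else v (i - N)) k = traj A B x u k :=
  traj_congr fun j hj => if_pos (by omega)

theorem traj_ite_add (x : EuclideanSpace ℝ (Fin n)) (u v : ℕ → EuclideanSpace ℝ (Fin m))
    (N j : ℕ) :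
    traj A B x (fun i => if i < N then u i else v (i - N)) (N + j) =
      traj A B (traj A B x u N) v j := by
  rw [traj_add, traj_ite_of_le x u v le_rfl]
  congr 1
  ext1 i
  simp

theorem Vinf0_le_tsum (hQ : Q.PosSemidef) (hR : R.PosSemidef) {x : EuclideanSpace ℝ (Fin n)}
    {u : ℕ → EuclideanSpace ℝ (Fin m)} (hU : ∀ k, u k ∈ U) (hX : ∀ k, traj A B x u k ∈ X)
    (hconv : Tendsto (fun k => traj A B x u k) atTop (𝓝 0)) :
    Vinf0 A B X U Q R x ≤ ∑' k, stageCost Q R (traj A B x u k) (u k) := by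
  refine csInf_le ⟨0, ?_⟩ ⟨u, hU, hX, hconv, rfl⟩
  rintro _ ⟨v, -, -, -, rfl⟩
  exact tsum_nonneg fun k => stageCost_nonneg hQ hR _ _

theorem Vinf0_le_sum_add_tsum (hQ : Q.PosSemidef) (hR : R.PosSemidef)
    {x : EuclideanSpace ℝ (Fin n)} {N : ℕ} {u v : ℕ → EuclideanSpace ℝ (Fin m)}
    (hU : ∀ k < N, u k ∈ U) (hX : ∀ k < N, traj A B x u k ∈ X)
    (hvU : ∀ j, v j ∈ U) (hvX : ∀ j, traj A B (traj A B x u N) v j ∈ X)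
    (hvconv : Tendsto (fun j => traj A B (traj A B x u N) v j) atTop (𝓝 0))
    (hvsum : Summable fun j => stageCost Q R (traj A B (traj A B x u N) v j) (v j)) :
    Vinf0 A B X U Q R x ≤ ∑ k ∈ range N, stageCost Q R (traj A B x u k) (u k) +
      ∑' j, stageCost Q R (traj A B (traj A B x u N) v j) (v j) := by
  set w : ℕ → EuclideanSpace ℝ (Fin m) := fun i => if i < N then u i else v (i - N)
  have hw_add (j : ℕ) : w (N + j) = v j := by simp [w]
  have hw_tail (j : ℕ) : stageCost Q R (traj A B x w (j + N)) (w (j + N)) =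
      stageCost Q R (traj A B (traj A B x u N) v j) (v j) := by
    rw [add_comm, traj_ite_add, hw_add]
  have hw_head : ∀ k ∈ range N,
      stageCost Q R (traj A B x w k) (w k) = stageCost Q R (traj A B x u k) (u k) := by
    intro k hk
    have hk : k < N := mem_range.mp hk
    rw [traj_ite_of_le x u v hk.le]
    simp [w, hk]
  have hw_sum : Summable fun k => stageCost Q R (traj A B x w k) (w k) := by
    rw [← summable_nat_add_iff N]
    simpa only [hw_tail] using hvsum
  calc Vinf0 A B X U Q R x ≤ ∑' k, stageCost Q R (traj A B x w k) (w k) := by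
        refine Vinf0_le_tsum hQ hR (fun k => ?_) (fun k => ?_) ?_
        · by_cases hk : k < N
          · simpa [w, hk] using hU k hk
          · simpa [w, hk] using hvU (k - N)
        · by_cases hk : k < N
          · rw [traj_ite_of_le x u v hk.le]; exact hX k hk
          · obtain ⟨j, rfl⟩ := Nat.exists_eq_add_of_le (not_lt.mp hk)
            rw [traj_ite_add]; exact hvX j
        · refine (tendsto_add_atTop_iff_nat N).mp ?_
          convert hvconv using 2 with j
          rw [add_comm, traj_ite_add]
    _ = _ := by
        rw [← hw_sum.sum_add_tsum_nat_add N, sum_congr rfl hw_head]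
        simp only [hw_tail]

noncomputable def closedLoop {n m : ℕ} (A : Matrix (Fin n) (Fin n) ℝ)
    (B : Matrix (Fin n) (Fin m) ℝ) (κ : EuclideanSpace ℝ (Fin n) → EuclideanSpace ℝ (Fin m))
    (y : EuclideanSpace ℝ (Fin n)) : EuclideanSpace ℝ (Fin n) :=
  WithLp.toLp 2 (A *ᵥ y + B *ᵥ κ y)

theorem traj_closedLoop (κ : EuclideanSpace ℝ (Fin n) → EuclideanSpace ℝ (Fin m))
    (z : EuclideanSpace ℝ (Fin n)) (k : ℕ) :
    traj A B z (fun j => κ ((closedLoop A B κ)^[j] z)) k = (closedLoop A B κ)^[k] z := by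
  induction k with
  | zero => rfl
  | succ k ih => rw [traj, ih, Function.iterate_succ_apply', closedLoop]

theorem Vinf0_le_of_closedLoop (hQ : Q.PosSemidef) (hR : R.PosSemidef)
    {S : Set (EuclideanSpace ℝ (Fin n))} {κ : EuclideanSpace ℝ (Fin n) → EuclideanSpace ℝ (Fin m)}
    {F : EuclideanSpace ℝ (Fin n) → ℝ} (hSX : S ⊆ X) (hκU : ∀ y ∈ S, κ y ∈ U)
    (hS : Set.MapsTo (closedLoop A B κ) S S)
    (hF : ∀ y ∈ S, F (closedLoop A B κ y) + stageCost Q R y (κ y) ≤ F y)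
    (hF0 : ∀ y ∈ S, 0 ≤ F y)
    (hconv : ∀ y ∈ S, Tendsto (fun k => (closedLoop A B κ)^[k] y) atTop (𝓝 0))
    {x : EuclideanSpace ℝ (Fin n)} {N : ℕ} {u : ℕ → EuclideanSpace ℝ (Fin m)}
    (hU : ∀ k < N, u k ∈ U) (hX : ∀ k < N, traj A B x u k ∈ X) (hN : traj A B x u N ∈ S) :
    Vinf0 A B X U Q R x ≤
      F (traj A B x u N) + ∑ k ∈ range N, stageCost Q R (traj A B x u k) (u k) := by
  have hiter (j : ℕ) : (closedLoop A B κ)^[j] (traj A B x u N) ∈ S := hS.iterate j hN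
  obtain ⟨hsum, htail⟩ := summable_iterate_and_tsum_le_of_mapsTo
    (L := fun y => stageCost Q R y (κ y)) hS hF hF0 (fun y _ => stageCost_nonneg hQ hR _ _) hN
  have hext := Vinf0_le_sum_add_tsum hQ hR
    (v := fun j => κ ((closedLoop A B κ)^[j] (traj A B x u N))) hU hX
    (fun j => hκU _ (hiter j)) (fun j => by rw [traj_closedLoop]; exact hSX (hiter j))
    (by simpa only [traj_closedLoop] using hconv _ hN) (by simpa only [traj_closedLoop] using hsum)
  simp only [traj_closedLoop] at hext
  linarith

end LinearSystem

theorem stmt_8_general {n m : ℕ} (A : Matrix (Fin n) (Fin n) ℝ) (B : Matrix (Fin n) (Fin m) ℝ)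
    (X : Set (EuclideanSpace ℝ (Fin n))) (U : Set (EuclideanSpace ℝ (Fin m)))
    (Q : Matrix (Fin n) (Fin n) ℝ) (R : Matrix (Fin m) (Fin m) ℝ)
    (hQ : Q.PosSemidef) (hR : R.PosSemidef)
    (Xinf : Set (EuclideanSpace ℝ (Fin n)))
    (hXinf : Xinf = {x | ∃ u : ℕ → EuclideanSpace ℝ (Fin m),
      (∀ k, u k ∈ U) ∧ (∀ k, traj A B x u k ∈ X) ∧
      Filter.Tendsto (fun k => traj A B x u k) Filter.atTop (nhds 0)})
    (Vp : EuclideanSpace ℝ (Fin n) → ℝ) (α₁ lam c β : ℝ)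
    (hα₁ : 0 < α₁) (hlam0 : 0 ≤ lam) (hlam1 : lam < 1) (hβ : 0 < β)
    (hlow : ∀ y : EuclideanSpace ℝ (Fin n), α₁ * ‖y‖ ^ 2 ≤ Vp y)
    (hdec : ∀ y ∈ Xinf, ∃ u ∈ U, ‖u‖ ≤ c * ‖y‖ ∧
      (WithLp.toLp 2 (A.mulVec y + B.mulVec u) : EuclideanSpace ℝ (Fin n)) ∈ Xinf ∧
      Vp (WithLp.toLp 2 (A.mulVec y + B.mulVec u) : EuclideanSpace ℝ (Fin n)) ≤ lam ^ 2 * Vp y ∧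
      β * Vp (WithLp.toLp 2 (A.mulVec y + B.mulVec u) : EuclideanSpace ℝ (Fin n)) + stageCost Q R y u ≤
        β * Vp y) :
    ∀ N : ℕ, ∀ x ∈ Xinf,
      Vinf0 A B X U Q R x ≤ V0 A B X U Xinf Q R Vp β N x := by
  intro N x hx
  choose! κ hκU _ hnext hdecay hcost using hdec
  have hinv : Set.MapsTo (closedLoop A B κ) Xinf Xinf := hnext
  have hXinfX : Xinf ⊆ X := by
    rw [hXinf]
    rintro y ⟨u, -, hX, -⟩
    exact hX 0
  have hconv (y : EuclideanSpace ℝ (Fin n)) (hy : y ∈ Xinf) :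
      Tendsto (fun k => (closedLoop A B κ)^[k] y) atTop (𝓝 0) :=
    tendsto_iterate_zero_of_mapsTo hinv hα₁ (sq_nonneg lam) (pow_lt_one₀ hlam0 hlam1 two_ne_zero)
      hlow hdecay hy
  have hVp0 (y : EuclideanSpace ℝ (Fin n)) : 0 ≤ β * Vp y :=
    mul_nonneg hβ.le ((by positivity : 0 ≤ α₁ * ‖y‖ ^ 2).trans (hlow y))
  have hfeasible : traj A B x (fun j => κ ((closedLoop A B κ)^[j] x)) N ∈ Xinf := by
    rw [traj_closedLoop]
    exact hinv.iterate N hx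
  refine le_csInf ⟨_, _, fun k _ => ?_, fun k _ => ?_, hfeasible, rfl⟩ ?_
  · exact hκU _ (hinv.iterate k hx)
  · rw [traj_closedLoop]
    exact hXinfX (hinv.iterate k hx)
  · rintro _ ⟨u, hU, hX, hN, rfl⟩
    exact Vinf0_le_of_closedLoop hQ hR hXinfX hκU hinv hcost (fun y _ => hVp0 y) hconv hU hX hN

/-- Under the stated assumptions on `V_p` (quadratic lower bound,
`λ`-decay with admissible inputs of norm `≤ c‖y‖`, and `β`-weighted decrease on the
maximal controllable set `X∞`), the infinite-horizon optimal value is a lower bound for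
the finite-horizon optimal values: `V⁰_∞(x) ≤ V⁰_{N,β}(x)` for all `N` and `x ∈ X∞`. -/
theorem stmt_8 {n m : ℕ} (A : Matrix (Fin n) (Fin n) ℝ) (B : Matrix (Fin n) (Fin m) ℝ)
    (X : Set (EuclideanSpace ℝ (Fin n))) (U : Set (EuclideanSpace ℝ (Fin m)))
    (Q : Matrix (Fin n) (Fin n) ℝ) (R : Matrix (Fin m) (Fin m) ℝ)
    (hQ : Q.PosSemidef) (hR : R.PosSemidef)
    (Xinf : Set (EuclideanSpace ℝ (Fin n)))
    (hXinf : Xinf = {x | ∃ u : ℕ → EuclideanSpace ℝ (Fin m),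
      (∀ k, u k ∈ U) ∧ (∀ k, traj A B x u k ∈ X) ∧
      Filter.Tendsto (fun k => traj A B x u k) Filter.atTop (nhds 0)})
    (Vp : EuclideanSpace ℝ (Fin n) → ℝ) (α₁ lam c β : ℝ)
    (hα₁ : 0 < α₁) (hlam0 : 0 ≤ lam) (hlam1 : lam < 1) (hc : 0 < c) (hβ : 0 < β)
    (hlow : ∀ y : EuclideanSpace ℝ (Fin n), α₁ * ‖y‖ ^ 2 ≤ Vp y)
    (hdec : ∀ y ∈ Xinf, ∃ u ∈ U, ‖u‖ ≤ c * ‖y‖ ∧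
      (WithLp.toLp 2 (A.mulVec y + B.mulVec u) : EuclideanSpace ℝ (Fin n)) ∈ Xinf ∧
      Vp (WithLp.toLp 2 (A.mulVec y + B.mulVec u) : EuclideanSpace ℝ (Fin n)) ≤ lam ^ 2 * Vp y ∧
      β * Vp (WithLp.toLp 2 (A.mulVec y + B.mulVec u) : EuclideanSpace ℝ (Fin n)) + stageCost Q R y u ≤
        β * Vp y) :
    ∀ N : ℕ, ∀ x ∈ Xinf,
      Vinf0 A B X U Q R x ≤ V0 A B X U Xinf Q R Vp β N x :=
  stmt_8_general A B X U Q R hQ hR Xinf hXinf Vp α₁ lam c β hα₁ hlam0 hlam1 hβ hlow hdec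
end

section
/- Let F ∈ ℝ^{r×n} with rows F_i satisfy max_{1≤i≤r} F_i y ≥ 0 for all y ∈ ℝⁿ, and suppose there exist α₁, α₂ > 0 with α₁‖y‖² ≤ (max_{1≤i≤r} F_i y)² ≤ α₂‖y‖² for all y ∈ ℝⁿ. Let λ ∈ [0,1) and let ψ : ℕ → ℝⁿ be any sequence satisfying max_{1≤i≤r} F_i ψ(k+1) ≤ λ · max_{1≤i≤r} F_i ψ(k) for all k ∈ ℕ. Then ‖ψ(k)‖ ≤ √(α₂/α₁) · λ^k · ‖ψ(0)‖ for all k ∈ ℕ; in particular ψ(k) → 0 exponentially. -/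
open scoped Matrix

/-- Let `F ∈ ℝ^{r×n}` have nonnegative row-max and suppose
`α₁‖y‖² ≤ (max_i Fᵢ y)² ≤ α₂‖y‖²` for some `α₁, α₂ > 0`. If a sequence `ψ` satisfies
the contraction `max_i Fᵢ ψ(k+1) ≤ λ max_i Fᵢ ψ(k)` for all `k`, with `λ ∈ [0,1)`, then
`‖ψ(k)‖ ≤ √(α₂/α₁) λ^k ‖ψ(0)‖` for all `k`; in particular `ψ(k) → 0` exponentially. -/
theorem stmt_13 {n r : ℕ} (hr : 0 < r) (F : Matrix (Fin r) (Fin n) ℝ)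
    (hF : ∀ y : EuclideanSpace ℝ (Fin n), 0 ≤ ⨆ i, F i ⬝ᵥ (y : Fin n → ℝ))
    (α₁ α₂ : ℝ) (hα₁ : 0 < α₁) (hα₂ : 0 < α₂)
    (hbounds : ∀ y : EuclideanSpace ℝ (Fin n),
      α₁ * ‖y‖ ^ 2 ≤ (⨆ i, F i ⬝ᵥ (y : Fin n → ℝ)) ^ 2 ∧
        (⨆ i, F i ⬝ᵥ (y : Fin n → ℝ)) ^ 2 ≤ α₂ * ‖y‖ ^ 2)
    (lam : ℝ) (hlam0 : 0 ≤ lam) (hlam1 : lam < 1)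
    (ψ : ℕ → EuclideanSpace ℝ (Fin n))
    (hψ : ∀ k : ℕ, (⨆ i, F i ⬝ᵥ (ψ (k + 1) : Fin n → ℝ)) ≤
      lam * ⨆ i, F i ⬝ᵥ (ψ k : Fin n → ℝ)) :
    ∀ k : ℕ, ‖ψ k‖ ≤ Real.sqrt (α₂ / α₁) * lam ^ k * ‖ψ 0‖ := by
  set V : ℕ → ℝ := fun k => ⨆ i, F i ⬝ᵥ (ψ k : Fin n → ℝ) with hV
  have hVnn : ∀ k, 0 ≤ V k := fun k => hF (ψ k)
  have hVdecay : ∀ k, V k ≤ lam ^ k * V 0 := by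
    intro k
    induction k with
    | zero => simp
    | succ k ih =>
      calc V (k + 1) ≤ lam * V k := hψ k
        _ ≤ lam * (lam ^ k * V 0) := by
            exact mul_le_mul_of_nonneg_left ih hlam0
        _ = lam ^ (k + 1) * V 0 := by ring
  intro k
  have h1 : α₁ * ‖ψ k‖ ^ 2 ≤ V k ^ 2 := (hbounds (ψ k)).1
  have h2 : V 0 ^ 2 ≤ α₂ * ‖ψ 0‖ ^ 2 := (hbounds (ψ 0)).2
  have hVk2 : V k ^ 2 ≤ (lam ^ k) ^ 2 * V 0 ^ 2 := by
    have := pow_le_pow_left₀ (hVnn k) (hVdecay k) 2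
    calc V k ^ 2 ≤ (lam ^ k * V 0) ^ 2 := this
      _ = (lam ^ k) ^ 2 * V 0 ^ 2 := by ring
  have key : ‖ψ k‖ ^ 2 ≤ (Real.sqrt (α₂ / α₁) * lam ^ k * ‖ψ 0‖) ^ 2 := by
    have hs : Real.sqrt (α₂ / α₁) ^ 2 = α₂ / α₁ :=
      Real.sq_sqrt (le_of_lt (div_pos hα₂ hα₁))
    have : α₁ * ‖ψ k‖ ^ 2 ≤ (lam ^ k) ^ 2 * (α₂ * ‖ψ 0‖ ^ 2) := by
      calc α₁ * ‖ψ k‖ ^ 2 ≤ V k ^ 2 := h1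
        _ ≤ (lam ^ k) ^ 2 * V 0 ^ 2 := hVk2
        _ ≤ (lam ^ k) ^ 2 * (α₂ * ‖ψ 0‖ ^ 2) := by
            exact mul_le_mul_of_nonneg_left h2 (by positivity)
    have h3 : ‖ψ k‖ ^ 2 ≤ (lam ^ k) ^ 2 * (α₂ * ‖ψ 0‖ ^ 2) / α₁ := by
      rw [le_div_iff₀ hα₁]; linarith
    calc ‖ψ k‖ ^ 2 ≤ (lam ^ k) ^ 2 * (α₂ * ‖ψ 0‖ ^ 2) / α₁ := h3
      _ = (Real.sqrt (α₂ / α₁) * lam ^ k * ‖ψ 0‖) ^ 2 := by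
          rw [mul_pow, mul_pow, hs]; ring
  have hrhs : 0 ≤ Real.sqrt (α₂ / α₁) * lam ^ k * ‖ψ 0‖ := by positivity
  calc ‖ψ k‖ = Real.sqrt (‖ψ k‖ ^ 2) := by
        rw [Real.sqrt_sq (norm_nonneg _)]
    _ ≤ Real.sqrt ((Real.sqrt (α₂ / α₁) * lam ^ k * ‖ψ 0‖) ^ 2) :=
        Real.sqrt_le_sqrt key
    _ = Real.sqrt (α₂ / α₁) * lam ^ k * ‖ψ 0‖ := Real.sqrt_sq hrhs
end
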